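/- Let d ≥ 1, let b : ℝ^d → ℝ^d and k : ℝ^d → [0, ∞), and let f, g : ℝ̂^d → ℝ be C² on ℝ̂^d. Then for every x ∈ ℝ^d, the extended generator with killing 𝒜̂ satisfies the product rule 𝒜̂(f·g)(x) = f(x)·𝒜̂g(x) + (⟨b(x), ∇f(x)⟩ + (1/2)Δf(x))·g(x) + ⟨∇f(x), ∇g(x)⟩ − k(x)·(f(x) − f(∞))·g(∞), where the product f·g is defined pointwise on ℝ̂^d with (f·g)(∞) = f(∞)g(∞). -/

import Mathlib

/-! The derivative part of the generator obeys the classical rules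
`∇(FG) = F ∇G + G ∇F` and `Δ(FG) = F ΔG + G ΔF + 2 ⟪∇F, ∇G⟫`; the killing part is algebra, since
`f(x)g(x) - f(∞)g(∞) = f(x)(g(x) - g(∞)) + (f(x) - f(∞))g(∞)`. -/

open OnePoint

noncomputable section

/-- Laplacian of `f : ℝ^d → ℝ` at `x`, computed as the trace of the second derivative. -/
def lap {d : ℕ} (f : EuclideanSpace ℝ (Fin d) → ℝ) (x : EuclideanSpace ℝ (Fin d)) : ℝ :=
  ∑ i, fderiv ℝ (fderiv ℝ f) x (EuclideanSpace.single i 1) (EuclideanSpace.single i 1)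

/-- The restriction of a function on `ℝ̂^d = ℝ^d ∪ {∞}` to `ℝ^d`. -/
def restr {d : ℕ} (f : OnePoint (EuclideanSpace ℝ (Fin d)) → ℝ) :
    EuclideanSpace ℝ (Fin d) → ℝ :=
  fun x => f x

/-- `f : ℝ̂^d → ℝ` is C² on `ℝ̂^d`: continuous on the one-point compactification, and its
restriction to `ℝ^d` is twice continuously differentiable. -/
def C2Hat {d : ℕ} (f : OnePoint (EuclideanSpace ℝ (Fin d)) → ℝ) : Prop :=
  Continuous f ∧ ContDiff ℝ 2 (restr f)

/-- The extended generator with killing on `ℝ̂^d`: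
`𝒜̂f(x) = ⟨b(x), ∇f(x)⟩ + (1/2)Δf(x) − k(x)(f(x) − f(∞))` for `x ∈ ℝ^d`, `𝒜̂f(∞) = 0`. -/
def hatGen {d : ℕ} (b : EuclideanSpace ℝ (Fin d) → EuclideanSpace ℝ (Fin d))
    (k : EuclideanSpace ℝ (Fin d) → ℝ)
    (f : OnePoint (EuclideanSpace ℝ (Fin d)) → ℝ) :
    OnePoint (EuclideanSpace ℝ (Fin d)) → ℝ
  | ∞ => 0
  | (x : EuclideanSpace ℝ (Fin d)) =>
      (inner ℝ (b x) (gradient (restr f) x) : ℝ) + (1 / 2) * lap (restr f) x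
        - k x * (f x - f ∞)

section SecondDerivative

variable {𝕜 E : Type*} [NontriviallyNormedField 𝕜] [NormedAddCommGroup E] [NormedSpace 𝕜 E]
  {F G : E → 𝕜} {x : E}

theorem fderiv_fderiv_mul_apply (hF : ContDiffAt 𝕜 2 F x) (hG : ContDiffAt 𝕜 2 G x) (v w : E) :
    fderiv 𝕜 (fderiv 𝕜 fun y => F y * G y) x v w =
      F x * fderiv 𝕜 (fderiv 𝕜 G) x v w + fderiv 𝕜 F x v * fderiv 𝕜 G x w
        + G x * fderiv 𝕜 (fderiv 𝕜 F) x v w + fderiv 𝕜 G x v * fderiv 𝕜 F x w := by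
  have hF₁ : DifferentiableAt 𝕜 F x := hF.differentiableAt two_ne_zero
  have hG₁ : DifferentiableAt 𝕜 G x := hG.differentiableAt two_ne_zero
  have hF₂ : DifferentiableAt 𝕜 (fderiv 𝕜 F) x :=
    (hF.fderiv_right (m := 1) le_rfl).differentiableAt one_ne_zero
  have hG₂ : DifferentiableAt 𝕜 (fderiv 𝕜 G) x :=
    (hG.fderiv_right (m := 1) le_rfl).differentiableAt one_ne_zero
  have hprod : fderiv 𝕜 (fun y => F y * G y) =ᶠ[nhds x]
      fun y => F y • fderiv 𝕜 G y + G y • fderiv 𝕜 F y := by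
    filter_upwards [hF.eventually (by simp), hG.eventually (by simp)] with y hFy hGy
    exact fderiv_fun_mul (hFy.differentiableAt two_ne_zero) (hGy.differentiableAt two_ne_zero)
  rw [hprod.fderiv_eq, fderiv_fun_add (hF₁.fun_smul hG₂) (hG₁.fun_smul hF₂),
    fderiv_fun_smul hF₁ hG₂, fderiv_fun_smul hG₁ hF₂]
  simp only [add_apply, smul_apply, ContinuousLinearMap.smulRight_apply, smul_eq_mul]
  ring

end SecondDerivative

section Gradient

variable {E : Type*} [NormedAddCommGroup E] [InnerProductSpace ℝ E] [CompleteSpace E]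
  {F G : E → ℝ} {x : E}

theorem gradient_fun_mul (hF : DifferentiableAt ℝ F x) (hG : DifferentiableAt ℝ G x) :
    gradient (fun y => F y * G y) x = F x • gradient G x + G x • gradient F x := by
  apply ext_inner_right ℝ
  intro v
  simp only [inner_add_left, real_inner_smul_left, inner_gradient_left, fderiv_fun_mul hF hG,
    add_apply, smul_apply, smul_eq_mul]

theorem OrthonormalBasis.inner_gradient_gradient {ι : Type*} [Fintype ι]
    (b : OrthonormalBasis ι ℝ E) :
    inner ℝ (gradient F x) (gradient G x) = ∑ i, fderiv ℝ F x (b i) * fderiv ℝ G x (b i) := by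
  rw [← b.sum_inner_mul_inner]
  simp only [inner_gradient_left, inner_gradient_right, Real.ringHom_apply]

end Gradient

theorem lap_mul {d : ℕ} {F G : EuclideanSpace ℝ (Fin d) → ℝ} {x : EuclideanSpace ℝ (Fin d)}
    (hF : ContDiffAt ℝ 2 F x) (hG : ContDiffAt ℝ 2 G x) :
    lap (fun y => F y * G y) x =
      F x * lap G x + G x * lap F x + 2 * inner ℝ (gradient F x) (gradient G x) := by
  simp only [lap, (EuclideanSpace.basisFun (Fin d) ℝ).inner_gradient_gradient,
    EuclideanSpace.basisFun_apply, fderiv_fderiv_mul_apply hF hG, Finset.mul_sum,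
    ← Finset.sum_add_distrib]
  exact Finset.sum_congr rfl fun i _ => by ring

theorem hatGen_coe {d : ℕ} (b : EuclideanSpace ℝ (Fin d) → EuclideanSpace ℝ (Fin d))
    (k : EuclideanSpace ℝ (Fin d) → ℝ) (f : OnePoint (EuclideanSpace ℝ (Fin d)) → ℝ)
    (x : EuclideanSpace ℝ (Fin d)) :
    hatGen b k f x =
      inner ℝ (b x) (gradient (restr f) x) + 1 / 2 * lap (restr f) x - k x * (f x - f ∞) :=
  rfl

theorem hatGen_mul_general {d : ℕ}
    (b : EuclideanSpace ℝ (Fin d) → EuclideanSpace ℝ (Fin d))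
    (k : EuclideanSpace ℝ (Fin d) → ℝ)
    (f g : OnePoint (EuclideanSpace ℝ (Fin d)) → ℝ)
    (hf : C2Hat f) (hg : C2Hat g) :
    ∀ x : EuclideanSpace ℝ (Fin d),
      hatGen b k (fun y => f y * g y) x =
        f x * hatGen b k g x
          + ((inner ℝ (b x) (gradient (restr f) x) : ℝ) + (1 / 2) * lap (restr f) x) * g x
          + (inner ℝ (gradient (restr f) x) (gradient (restr g) x) : ℝ)
          - k x * (f x - f ∞) * g ∞ := by
  intro x
  have hF := hf.2.contDiffAt (x := x)
  have hG := hg.2.contDiffAt (x := x)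
  have hrestr : restr (fun y => f y * g y) = fun y => restr f y * restr g y := rfl
  rw [hatGen_coe, hatGen_coe, hrestr, lap_mul hF hG,
    gradient_fun_mul (hF.differentiableAt two_ne_zero) (hG.differentiableAt two_ne_zero),
    inner_add_right, real_inner_smul_right, real_inner_smul_right]
  simp only [restr]
  ring

/-- **Product rule for the extended generator with killing**: for `f, g` C² on `ℝ̂^d`
and `x ∈ ℝ^d`,
`𝒜̂(fg)(x) = f(x)𝒜̂g(x) + (⟨b(x),∇f(x)⟩ + ½Δf(x))g(x) + ⟨∇f(x),∇g(x)⟩ − k(x)(f(x)−f(∞))g(∞)`. -/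
theorem hatGen_mul {d : ℕ} (hd : 1 ≤ d)
    (b : EuclideanSpace ℝ (Fin d) → EuclideanSpace ℝ (Fin d))
    (k : EuclideanSpace ℝ (Fin d) → ℝ) (hk0 : ∀ x, 0 ≤ k x)
    (f g : OnePoint (EuclideanSpace ℝ (Fin d)) → ℝ)
    (hf : C2Hat f) (hg : C2Hat g) :
    ∀ x : EuclideanSpace ℝ (Fin d),
      hatGen b k (fun y => f y * g y) x =
        f x * hatGen b k g x
          + ((inner ℝ (b x) (gradient (restr f) x) : ℝ) + (1 / 2) * lap (restr f) x) * g x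
          + (inner ℝ (gradient (restr f) x) (gradient (restr g) x) : ℝ)
          - k x * (f x - f ∞) * g ∞ :=
  hatGen_mul_general b k f g hf hg
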